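/- Let G be a finite simple graph with r_2(G) = 2k that has a perfect odd cover {(X_1, Y_1), …, (X_k, Y_k)}. If B is a subset of V(G) such that the rows of the adjacency matrix A_G indexed by B form a basis of the row space of A_G over F_2 (so |B| = 2k and these rows are linearly independent), then B is a complete system of distinct representatives for the 2k partite sets X_1, Y_1, …, X_k, Y_k; that is, the elements of B can be enumerated as x_1, y_1, …, x_k, y_k with x_i ∈ X_i and y_i ∈ Y_i for all i ∈ {1, …, k}. -/

import Mathlib

open Finset

/-- The number of bicliques in the collection `f` that cover the pair `(u, v)`. -/
noncomputable def coversCount {V : Type*} {m : ℕ} (f : Fin m → Finset V × Finset V) (u v : V) : ℕ :=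
  Nat.card {i : Fin m // (u ∈ (f i).1 ∧ v ∈ (f i).2) ∨ (u ∈ (f i).2 ∧ v ∈ (f i).1)}

/-- `f` is an odd cover of `G`: a collection of bicliques (pairs of disjoint finite sets of
vertices) covering each edge of `G` an odd number of times and each nonedge an even number
of times. -/
def IsOddCover {V : Type*} (G : SimpleGraph V) {m : ℕ}
    (f : Fin m → Finset V × Finset V) : Prop :=
  (∀ i, Disjoint (f i).1 (f i).2) ∧
  ∀ u v : V, u ≠ v → (G.Adj u v ↔ Odd (coversCount f u v))

/-- `b2 G` is the minimum cardinality of an odd cover of `G`. -/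
noncomputable def b2 {V : Type*} (G : SimpleGraph V) : ℕ :=
  sInf {m : ℕ | ∃ f : Fin m → Finset V × Finset V, IsOddCover G f}

/-- `r2 G` is the rank over `𝔽₂` of the adjacency matrix of `G`. -/
noncomputable def r2 {V : Type*} [Fintype V] (G : SimpleGraph V) : ℕ :=
  letI := Classical.decRel G.Adj
  (SimpleGraph.adjMatrix (ZMod 2) G).rank

/-- Disjoint union of an indexed family of graphs, on the sigma type of the vertex types. -/
def sigmaSum {ι : Type*} {α : ι → Type*} (G : (i : ι) → SimpleGraph (α i)) :
    SimpleGraph ((i : ι) × α i) where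
  Adj x y := ∃ (i : ι) (a b : α i), (G i).Adj a b ∧ x = ⟨i, a⟩ ∧ y = ⟨i, b⟩
  symm := by constructor; rintro x y ⟨i, a, b, h, rfl, rfl⟩; exact ⟨i, b, a, h.symm, rfl, rfl⟩
  loopless := by
    constructor
    rintro x ⟨i, a, b, h, rfl, h2⟩
    obtain ⟨-, h3⟩ := Sigma.mk.inj_iff.mp h2
    exact (G i).loopless.irrefl a (by cases h3; exact h)

/-!
Over `𝔽₂` a perfect odd cover factors the adjacency matrix as `A = N Sᵀ`, where `N` is the
`V × 2k` incidence matrix of the partite sets `X₁, …, X_k, Y₁, …, Y_k` and `S` is `N` with each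
`Xᵢ` exchanged for `Yᵢ`. Hence the rows of `N` indexed by `B` are linearly independent, and since
`|B| = rank A = 2k` they form an invertible square matrix. A nonzero term of the Leibniz expansion
of its determinant matches `B` bijectively with the partite sets, each vertex lying in its set.
-/

open Matrix

theorem Matrix.exists_perm_forall_ne_zero_of_det_ne_zero {n R : Type*} [DecidableEq n]
    [Fintype n] [CommRing R] {M : Matrix n n R} (h : M.det ≠ 0) :
    ∃ σ : Equiv.Perm n, ∀ j, M (σ j) j ≠ 0 := by
  contrapose! h
  rw [det_apply]
  refine Finset.sum_eq_zero fun σ _ => ?_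
  obtain ⟨j, hj⟩ := h σ
  rw [Finset.prod_eq_zero (f := fun i => M (σ i) i) (Finset.mem_univ j) hj, smul_zero]

theorem exists_equiv_apply_ne_zero_of_linearIndependent {K ι κ : Type*} [Field K]
    [Fintype ι] [Fintype κ] {c : ι → κ → K} (hc : LinearIndependent K c)
    (hcard : Fintype.card ι = Fintype.card κ) : ∃ e : κ ≃ ι, ∀ j, c (e j) j ≠ 0 := by
  classical
  let e₀ : κ ≃ ι := Fintype.equivOfCardEq hcard.symm
  have hdet : (Matrix.of fun j => c (e₀ j)).det ≠ 0 :=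
    ((isUnit_iff_isUnit_det _).mp
      (linearIndependent_rows_iff_isUnit.mp (hc.comp e₀ e₀.injective))).ne_zero
  obtain ⟨σ, hσ⟩ := exists_perm_forall_ne_zero_of_det_ne_zero hdet
  exact ⟨σ.trans e₀, hσ⟩

theorem r2_eq_rank {V : Type*} [Fintype V] (G : SimpleGraph V) [DecidableRel G.Adj] :
    r2 G = (G.adjMatrix (ZMod 2)).rank := by
  unfold r2
  congr!

section OddCover

variable {V : Type*} {m : ℕ} (f : Fin m → Finset V × Finset V)

def partiteSets : Fin m ⊕ Fin m → Finset V :=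
  Sum.elim (fun i => (f i).1) (fun i => (f i).2)

def partiteIncidence [DecidableEq V] : Matrix V (Fin m ⊕ Fin m) (ZMod 2) :=
  Matrix.of fun u j => if u ∈ partiteSets f j then 1 else 0

theorem partiteIncidence_ne_zero_iff [DecidableEq V] {u : V} {j : Fin m ⊕ Fin m} :
    partiteIncidence f u j ≠ 0 ↔ u ∈ partiteSets f j := by
  simp [partiteIncidence]

theorem natCast_coversCount {R : Type*} [Semiring R] [DecidableEq V] (u v : V) :
    (coversCount f u v : R) = ∑ i, if (u ∈ (f i).1 ∧ v ∈ (f i).2) ∨ (u ∈ (f i).2 ∧ v ∈ (f i).1)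
      then 1 else 0 := by
  rw [Finset.sum_boole, coversCount, Nat.card_eq_fintype_card, Fintype.card_subtype]

variable {f} {G : SimpleGraph V}

theorem IsOddCover.coversCount_self (hf : IsOddCover G f) (u : V) : coversCount f u u = 0 := by
  have : IsEmpty {i : Fin m // (u ∈ (f i).1 ∧ u ∈ (f i).2) ∨ (u ∈ (f i).2 ∧ u ∈ (f i).1)} :=
    ⟨fun ⟨i, hi⟩ => Finset.disjoint_left.mp (hf.1 i) (by tauto) (by tauto)⟩
  exact Nat.card_of_isEmpty

theorem IsOddCover.adjMatrix_apply [DecidableRel G.Adj] (hf : IsOddCover G f) (u v : V) :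
    G.adjMatrix (ZMod 2) u v = coversCount f u v := by
  rw [SimpleGraph.adjMatrix_apply]
  obtain rfl | huv := eq_or_ne u v
  · simp [hf.coversCount_self]
  · split_ifs with hadj
    · exact (ZMod.natCast_eq_one_iff_odd.mpr ((hf.2 u v huv).mp hadj)).symm
    · exact (ZMod.natCast_eq_zero_iff_even.mpr
        (Nat.not_odd_iff_even.mp (mt (hf.2 u v huv).mpr hadj))).symm

theorem IsOddCover.adjMatrix_eq [DecidableRel G.Adj] [DecidableEq V] (hf : IsOddCover G f) :
    G.adjMatrix (ZMod 2) =
      partiteIncidence f * ((partiteIncidence f).submatrix id Sum.swap)ᵀ := by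
  ext u v
  rw [hf.adjMatrix_apply, natCast_coversCount, mul_apply, Fintype.sum_sum_type,
    ← Finset.sum_add_distrib]
  refine Finset.sum_congr rfl fun i _ => ?_
  have hu : u ∈ (f i).1 → u ∉ (f i).2 := fun h => Finset.disjoint_left.mp (hf.1 i) h
  have hv : v ∈ (f i).1 → v ∉ (f i).2 := fun h => Finset.disjoint_left.mp (hf.1 i) h
  simp only [partiteIncidence, partiteSets, of_apply, transpose_apply, submatrix_apply, id,
    Sum.swap_inl, Sum.swap_inr, Sum.elim_inl, Sum.elim_inr]
  by_cases u ∈ (f i).1 <;> by_cases u ∈ (f i).2 <;> by_cases v ∈ (f i).1 <;>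
    by_cases v ∈ (f i).2 <;> simp_all

end OddCover

/-- Let `G` have rank `2k` over `𝔽₂` and a perfect odd cover
`(X₁,Y₁),…,(X_k,Y_k)`. If the rows of the adjacency matrix indexed by `B ⊆ V(G)` form a basis
of its row space, then `B` is a complete system of distinct representatives for the partite
sets `X₁, Y₁, …, X_k, Y_k`. -/
theorem stmt4 {V : Type*} [Fintype V] (G : SimpleGraph V) [DecidableRel G.Adj]
    (k : ℕ) (hk : r2 G = 2 * k)
    (f : Fin k → Finset V × Finset V) (hf : IsOddCover G f)
    (B : Finset V)
    (hind : LinearIndependent (ZMod 2)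
      (fun b : B => SimpleGraph.adjMatrix (ZMod 2) G b.val))
    (hspan : Submodule.span (ZMod 2)
        (Set.range (fun b : B => SimpleGraph.adjMatrix (ZMod 2) G b.val)) =
      Submodule.span (ZMod 2) (Set.range (fun v : V => SimpleGraph.adjMatrix (ZMod 2) G v))) :
    ∃ x y : Fin k → V,
      (∀ i, x i ∈ (f i).1) ∧ (∀ i, y i ∈ (f i).2) ∧
      Function.Injective (Sum.elim x y) ∧
      (B : Set V) = Set.range (Sum.elim x y) := by
  classical
  set N := partiteIncidence f
  have hrows : (fun b : B => G.adjMatrix (ZMod 2) b) =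
      vecMulLinear (N.submatrix id Sum.swap)ᵀ ∘ fun b : B => N b := by
    rw [hf.adjMatrix_eq]
    rfl
  have hcard : Fintype.card B = Fintype.card (Fin k ⊕ Fin k) := by
    rw [← finrank_span_eq_card hind, hspan, Fintype.card_sum, Fintype.card_fin, ← two_mul, ← hk,
      r2_eq_rank, rank_eq_finrank_span_row]
    rfl
  obtain ⟨e, he⟩ := exists_equiv_apply_ne_zero_of_linearIndependent
    (LinearIndependent.of_comp _ (hrows ▸ hind)) hcard
  let g : Fin k ⊕ Fin k → V := Subtype.val ∘ e
  refine ⟨g ∘ .inl, g ∘ .inr,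
    fun i => (partiteIncidence_ne_zero_iff f).mp (he (.inl i)),
    fun i => (partiteIncidence_ne_zero_iff f).mp (he (.inr i)), ?_, ?_⟩
  all_goals rw [Sum.elim_comp_inl_inr]
  · exact Subtype.val_injective.comp e.injective
  · rw [Set.range_comp, e.range_eq_univ, Set.image_univ, Subtype.range_coe]
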